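/- arXiv:1907.10392 — 5 statements merged into one kernel-verified Lean document; each statement's English description precedes it below -/
import Mathlib

section
/- Let (X, U, V, C, S) be a GSVD of the pair (A, B), and let U⊥ ∈ ℝ^{m×(m−n)} satisfy Uᵀ U⊥ = 0 and U⊥ᵀ U⊥ = I_{m−n}. Set Σ = C S⁻¹ and W = X S⁻¹. Define the augmented matrices Â = [[0, A], [Aᵀ, 0]] ∈ ℝ^{(m+n)×(m+n)} and B̂ = [[I_m, 0], [0, BᵀB]] ∈ ℝ^{(m+n)×(m+n)}, the (m+n)×(m+n) block matrix Y = [[(1/√2)U, (1/√2)U, U⊥], [(1/√2)W, −(1/√2)W, 0]] (row blocks of sizes m and n, column blocks of sizes n, n and m−n), and the block-diagonal matrix Σ̂ = diag(Σ, −Σ, 0_{m−n}). Then Â Y = B̂ Y Σ̂ and Yᵀ B̂ Y = I_{m+n}. -/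
/-!
With `W = X S⁻¹` the GSVD gives `A W = U Σ`, `Aᵀ U = X⁻ᵀ C = BᵀB W Σ`, `Aᵀ U⊥ = 0`
and `Wᵀ BᵀB W = 1`. Multiplying out the blocks, the columns `(U, ±W)/√2` of `Y` are then
generalized eigenvectors of `(Â, B̂)` for `±Σ` and those of `(U⊥, 0)` for `0`, and the
`B̂`-Gram matrix of `Y` is the identity because the cross terms `UᵀU - WᵀBᵀBW` cancel.
-/

open Matrix

theorem Matrix.smul_fromRows {R S : Type*} {m₁ m₂ n : Type*} [SMul S R] (c : S)
    (A₁ : Matrix m₁ n R) (A₂ : Matrix m₂ n R) :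
    c • fromRows A₁ A₂ = fromRows (c • A₁) (c • A₂) := by
  ext (_ | _) _ <;> rfl

section Augmented

variable {R : Type*} [CommRing R] {m n k l : Type*}

def augmentedEigvecs (c : R) (P : Matrix m k R) (Q : Matrix n k R) (E : Matrix m l R) :
    Matrix (m ⊕ n) ((k ⊕ k) ⊕ l) R :=
  fromBlocks (fromCols (c • P) (c • P)) E (fromCols (c • Q) (-(c • Q))) 0

theorem fromBlocks_antidiag_mul_augmentedEigvecs [Fintype m] [Fintype n] [Fintype k]
    [Fintype l] [DecidableEq m] {M : Matrix m n R} {G : Matrix n n R} {P : Matrix m k R}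
    {Q : Matrix n k R} {E : Matrix m l R} {S : Matrix k k R} (c : R)
    (hMQ : M * Q = P * S) (hMP : Mᵀ * P = G * Q * S) (hME : Mᵀ * E = 0) :
    fromBlocks 0 M Mᵀ 0 * augmentedEigvecs c P Q E =
      (fromBlocks 1 0 0 G : Matrix (m ⊕ n) (m ⊕ n) R) * augmentedEigvecs c P Q E *
        (fromBlocks (fromBlocks S 0 0 (-S)) 0 0 0 :
          Matrix ((k ⊕ k) ⊕ l) ((k ⊕ k) ⊕ l) R) := by
  simp only [augmentedEigvecs, fromBlocks_multiply, mul_fromCols]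
  simp [hMQ, hMP, hME, Matrix.mul_assoc, fromCols_mul_fromBlocks]

theorem augmentedEigvecs_transpose_mul_mul [Fintype m] [Fintype n] [DecidableEq m]
    [DecidableEq k] [DecidableEq l] {G : Matrix n n R} {P : Matrix m k R} {Q : Matrix n k R}
    {E : Matrix m l R} {c : R} (hP : Pᵀ * P = 1) (hQ : Qᵀ * G * Q = 1) (hPE : Pᵀ * E = 0)
    (hE : Eᵀ * E = 1) (hc : c * c + c * c = 1) :
    (augmentedEigvecs c P Q E)ᵀ * (fromBlocks 1 0 0 G : Matrix (m ⊕ n) (m ⊕ n) R) *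
      augmentedEigvecs c P Q E = 1 := by
  have hEP : Eᵀ * P = 0 := by simpa using congr_arg transpose hPE
  simp only [augmentedEigvecs, fromBlocks_transpose, transpose_fromCols, fromBlocks_multiply,
    fromRows_mul, mul_fromCols]
  simp [hP, hQ, hPE, hEP, hE, smul_fromRows, smul_smul, fromBlocks_add, ← add_smul, hc]

end Augmented

section GSVD

variable {K : Type*} [Field K] {m n p : Type*} [Fintype n] [Fintype p]
  [DecidableEq n] {A : Matrix m n K} {B : Matrix p n K} {X W : Matrix n n K}
  {U : Matrix m n K} {V : Matrix p n K} {a b : n → K}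

theorem isUnit_det_diagonal (hb : ∀ i, b i ≠ 0) : IsUnit (diagonal b).det :=
  (isUnit_iff_isUnit_det _).1 (isUnit_diagonal.2 (Pi.isUnit_iff.2 fun i => (hb i).isUnit))

theorem diagonal_mul_diagonal_mul_inv (hb : ∀ i, b i ≠ 0) :
    diagonal b * (diagonal a * (diagonal b)⁻¹) = diagonal a := by
  rw [← Matrix.mul_assoc, (commute_diagonal b a).eq,
    mul_nonsing_inv_cancel_right _ _ (isUnit_det_diagonal hb)]

theorem gsvd_mul_W (hX : IsUnit X.det) (hA : A = U * diagonal a * X⁻¹)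
    (hW : W = X * (diagonal b)⁻¹) : A * W = U * (diagonal a * (diagonal b)⁻¹) := by
  rw [hA, hW, ← Matrix.mul_assoc, nonsing_inv_mul_cancel_right _ _ hX, Matrix.mul_assoc]

theorem gsvd_transpose_mul [Fintype m] {l : Type*} (hA : A = U * diagonal a * X⁻¹)
    (Z : Matrix m l K) : Aᵀ * Z = X⁻¹ᵀ * diagonal a * (Uᵀ * Z) := by
  rw [hA, transpose_mul, transpose_mul, diagonal_transpose]
  simp only [Matrix.mul_assoc]

theorem gsvd_gram_mul_W (hX : IsUnit X.det) (hV : Vᵀ * V = 1) (hB : B = V * diagonal b * X⁻¹)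
    (hb : ∀ i, b i ≠ 0) (hW : W = X * (diagonal b)⁻¹) :
    Bᵀ * B * W = X⁻¹ᵀ * diagonal b := by
  have hgram : Bᵀ * B = X⁻¹ᵀ * diagonal b * diagonal b * X⁻¹ := by
    rw [hB, transpose_mul, transpose_mul, diagonal_transpose]
    simp only [Matrix.mul_assoc]
    rw [← Matrix.mul_assoc Vᵀ, hV, Matrix.one_mul]
  rw [hgram, hW, ← Matrix.mul_assoc, nonsing_inv_mul_cancel_right _ _ hX,
    mul_nonsing_inv_cancel_right _ _ (isUnit_det_diagonal hb)]

theorem gsvd_transpose_mul_U [Fintype m] (hX : IsUnit X.det) (hU : Uᵀ * U = 1)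
    (hV : Vᵀ * V = 1) (hA : A = U * diagonal a * X⁻¹) (hB : B = V * diagonal b * X⁻¹)
    (hb : ∀ i, b i ≠ 0) (hW : W = X * (diagonal b)⁻¹) :
    Aᵀ * U = Bᵀ * B * W * (diagonal a * (diagonal b)⁻¹) := by
  rw [gsvd_transpose_mul hA, hU, Matrix.mul_one, gsvd_gram_mul_W hX hV hB hb hW,
    Matrix.mul_assoc, diagonal_mul_diagonal_mul_inv hb]

theorem gsvd_W_transpose_gram_W (hX : IsUnit X.det) (hV : Vᵀ * V = 1)
    (hB : B = V * diagonal b * X⁻¹) (hb : ∀ i, b i ≠ 0) (hW : W = X * (diagonal b)⁻¹) :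
    Wᵀ * (Bᵀ * B) * W = 1 := by
  rw [Matrix.mul_assoc, gsvd_gram_mul_W hX hV hB hb hW, hW, transpose_mul,
    transpose_nonsing_inv, diagonal_transpose, Matrix.mul_assoc, ← Matrix.mul_assoc Xᵀ,
    ← transpose_mul, nonsing_inv_mul _ hX, transpose_one, Matrix.one_mul,
    nonsing_inv_mul _ (isUnit_det_diagonal hb)]

end GSVD

theorem stmt_0_general {m n p : ℕ}
    (A : Matrix (Fin m) (Fin n) ℝ) (B : Matrix (Fin p) (Fin n) ℝ)
    (X : Matrix (Fin n) (Fin n) ℝ)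
    (U : Matrix (Fin m) (Fin n) ℝ) (V : Matrix (Fin p) (Fin n) ℝ)
    (a b : Fin n → ℝ)
    (hX : IsUnit X.det)
    (hU : Uᵀ * U = 1) (hV : Vᵀ * V = 1)
    (hb : ∀ i, 0 < b i)
    (hA : A = U * Matrix.diagonal a * X⁻¹)
    (hB : B = V * Matrix.diagonal b * X⁻¹)
    (Uperp : Matrix (Fin m) (Fin (m - n)) ℝ)
    (hUp1 : Uᵀ * Uperp = 0) (hUp2 : Uperpᵀ * Uperp = 1)
    (Sig W : Matrix (Fin n) (Fin n) ℝ)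
    (hSig : Sig = Matrix.diagonal a * (Matrix.diagonal b)⁻¹)
    (hW : W = X * (Matrix.diagonal b)⁻¹)
    (Ahat Bhat : Matrix (Fin m ⊕ Fin n) (Fin m ⊕ Fin n) ℝ)
    (hAhat : Ahat = Matrix.fromBlocks 0 A Aᵀ 0)
    (hBhat : Bhat = Matrix.fromBlocks 1 0 0 (Bᵀ * B))
    (Y : Matrix (Fin m ⊕ Fin n) ((Fin n ⊕ Fin n) ⊕ Fin (m - n)) ℝ)
    (hY : Y = Matrix.fromBlocks
      (Matrix.fromCols ((Real.sqrt 2)⁻¹ • U) ((Real.sqrt 2)⁻¹ • U)) Uperp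
      (Matrix.fromCols ((Real.sqrt 2)⁻¹ • W) (-((Real.sqrt 2)⁻¹ • W))) 0)
    (Sighat : Matrix ((Fin n ⊕ Fin n) ⊕ Fin (m - n)) ((Fin n ⊕ Fin n) ⊕ Fin (m - n)) ℝ)
    (hSighat : Sighat = Matrix.fromBlocks (Matrix.fromBlocks Sig 0 0 (-Sig)) 0 0 0) :
    Ahat * Y = Bhat * Y * Sighat ∧ Yᵀ * Bhat * Y = 1 := by
  subst hAhat hBhat hY hSighat hSig
  have hb0 : ∀ i, b i ≠ 0 := fun i => (hb i).ne'
  have hc : (√2)⁻¹ * (√2)⁻¹ + (√2)⁻¹ * (√2)⁻¹ = (1 : ℝ) := by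
    rw [← mul_inv, Real.mul_self_sqrt zero_le_two]
    norm_num
  exact ⟨fromBlocks_antidiag_mul_augmentedEigvecs _ (gsvd_mul_W hX hA hW)
      (gsvd_transpose_mul_U hX hU hV hA hB hb0 hW)
      (by rw [gsvd_transpose_mul hA, hUp1, Matrix.mul_zero]),
    augmentedEigvecs_transpose_mul_mul hU (gsvd_W_transpose_gram_W hX hV hB hb0 hW) hUp1 hUp2
      hc⟩

/-- GSVD of (A,B) gives the generalized eigendecomposition
`Â Y = B̂ Y Σ̂` with `Yᵀ B̂ Y = I` for the first augmented pair. -/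
theorem stmt_0 {m n p : ℕ} (hmn : n ≤ m) (hpn : n ≤ p)
    (A : Matrix (Fin m) (Fin n) ℝ) (B : Matrix (Fin p) (Fin n) ℝ)
    (X : Matrix (Fin n) (Fin n) ℝ)
    (U : Matrix (Fin m) (Fin n) ℝ) (V : Matrix (Fin p) (Fin n) ℝ)
    (a b : Fin n → ℝ)
    (hX : IsUnit X.det)
    (hU : Uᵀ * U = 1) (hV : Vᵀ * V = 1)
    (ha : ∀ i, 0 < a i) (hb : ∀ i, 0 < b i)
    (hab : ∀ i, a i ^ 2 + b i ^ 2 = 1)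
    (hA : A = U * Matrix.diagonal a * X⁻¹)
    (hB : B = V * Matrix.diagonal b * X⁻¹)
    (Uperp : Matrix (Fin m) (Fin (m - n)) ℝ)
    (hUp1 : Uᵀ * Uperp = 0) (hUp2 : Uperpᵀ * Uperp = 1)
    (Sig W : Matrix (Fin n) (Fin n) ℝ)
    (hSig : Sig = Matrix.diagonal a * (Matrix.diagonal b)⁻¹)
    (hW : W = X * (Matrix.diagonal b)⁻¹)
    (Ahat Bhat : Matrix (Fin m ⊕ Fin n) (Fin m ⊕ Fin n) ℝ)
    (hAhat : Ahat = Matrix.fromBlocks 0 A Aᵀ 0)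
    (hBhat : Bhat = Matrix.fromBlocks 1 0 0 (Bᵀ * B))
    (Y : Matrix (Fin m ⊕ Fin n) ((Fin n ⊕ Fin n) ⊕ Fin (m - n)) ℝ)
    (hY : Y = Matrix.fromBlocks
      (Matrix.fromCols ((Real.sqrt 2)⁻¹ • U) ((Real.sqrt 2)⁻¹ • U)) Uperp
      (Matrix.fromCols ((Real.sqrt 2)⁻¹ • W) (-((Real.sqrt 2)⁻¹ • W))) 0)
    (Sighat : Matrix ((Fin n ⊕ Fin n) ⊕ Fin (m - n)) ((Fin n ⊕ Fin n) ⊕ Fin (m - n)) ℝ)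
    (hSighat : Sighat = Matrix.fromBlocks (Matrix.fromBlocks Sig 0 0 (-Sig)) 0 0 0) :
    Ahat * Y = Bhat * Y * Sighat ∧ Yᵀ * Bhat * Y = 1 :=
  stmt_0_general A B X U V a b hX hU hV hb hA hB Uperp hUp1 hUp2 Sig W hSig hW Ahat Bhat hAhat hBhat
    Y hY Sighat hSighat
end

section
/- Let (X, U, V, C, S) be a GSVD of the pair (A, B), and let V⊥ ∈ ℝ^{p×(p−n)} satisfy Vᵀ V⊥ = 0 and V⊥ᵀ V⊥ = I_{p−n}. Set Λ = S C⁻¹ and W′ = X C⁻¹. Define the augmented matrices B̃ = [[0, B], [Bᵀ, 0]] ∈ ℝ^{(p+n)×(p+n)} and Ã = [[I_p, 0], [0, AᵀA]] ∈ ℝ^{(p+n)×(p+n)}, the (p+n)×(p+n) block matrix Z = [[(1/√2)V, (1/√2)V, V⊥], [(1/√2)W′, −(1/√2)W′, 0]] (row blocks of sizes p and n, column blocks of sizes n, n and p−n), and the block-diagonal matrix Λ̃ = diag(Λ, −Λ, 0_{p−n}). Then B̃ Z = Ã Z Λ̃ and Zᵀ Ã Z = I_{p+n}. -/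
/-!
Write `W' = X C⁻¹` and `Λ = S C⁻¹`. The GSVD gives `A W' = U` and `B W' = V Λ`, hence
`W'ᵀ AᵀA W' = UᵀU = I` and `Bᵀ V = X⁻ᵀ S = X⁻ᵀ C Λ = AᵀA W' Λ`, while `Bᵀ V⊥ = 0` because
`Vᵀ V⊥ = 0`. Multiplying out the blocks of `Z`, these identities are exactly the blocks of
`B̃ Z = Ã Z Λ̃`; and `Zᵀ Ã Z = I` needs only the orthonormality relations of `V`, `V⊥` and
`W'` (for the inner product `AᵀA`) together with `2 (1/√2)² = 1`.
-/

open Matrix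

section AugmentedPencil

variable {R : Type*} [CommRing R] {p n q : Type*} [Fintype p] [Fintype n] [DecidableEq p]

theorem augmented_pencil_mul_eigvecs [Fintype q] (B : Matrix p n R) (M : Matrix n n R)
    (V : Matrix p n R) (Vperp : Matrix p q R) (W Lam : Matrix n n R) (c : R)
    (hBW : B * W = V * Lam) (hBtV : Bᵀ * V = M * W * Lam) (hBtVp : Bᵀ * Vperp = 0)
    (Z : Matrix (p ⊕ n) ((n ⊕ n) ⊕ q) R)
    (hZ : Z = fromBlocks (fromCols (c • V) (c • V)) Vperp (fromCols (c • W) (-(c • W))) 0) :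
    fromBlocks 0 B Bᵀ 0 * Z
      = fromBlocks (1 : Matrix p p R) 0 0 M * Z
        * fromBlocks (fromBlocks Lam 0 0 (-Lam)) 0 0 (0 : Matrix q q R) := by
  subst hZ
  simp only [fromBlocks_multiply, mul_fromCols, fromCols_mul_fromBlocks, Matrix.zero_mul,
    Matrix.mul_zero, Matrix.one_mul, add_zero, zero_add, Matrix.mul_smul, Matrix.mul_neg,
    Matrix.smul_mul, Matrix.neg_mul, neg_neg, hBW, hBtVp, hBtV, Matrix.mul_assoc]

theorem augmented_pencil_eigvecs_orthonormal [DecidableEq n] [DecidableEq q] (M : Matrix n n R)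
    (V : Matrix p n R) (Vperp : Matrix p q R) (W : Matrix n n R) (c : R)
    (hV : Vᵀ * V = 1) (hVVp : Vᵀ * Vperp = 0) (hVp : Vperpᵀ * Vperp = 1)
    (hW : Wᵀ * M * W = 1) (hc : c * c + c * c = 1)
    (Z : Matrix (p ⊕ n) ((n ⊕ n) ⊕ q) R)
    (hZ : Z = fromBlocks (fromCols (c • V) (c • V)) Vperp (fromCols (c • W) (-(c • W))) 0) :
    Zᵀ * fromBlocks (1 : Matrix p p R) 0 0 M * Z = 1 := by
  have hVpV : Vperpᵀ * V = 0 := by simpa using congrArg transpose hVVp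
  subst hZ
  simp only [fromBlocks_transpose, transpose_fromCols, transpose_smul, transpose_neg,
    transpose_zero, fromBlocks_multiply, fromRows_mul, mul_fromCols, Matrix.zero_mul,
    Matrix.mul_zero, Matrix.mul_one, add_zero, zero_add, Matrix.mul_smul, Matrix.mul_neg,
    Matrix.smul_mul, Matrix.neg_mul, hV, hVVp, hVpV, hVp, hW, smul_zero, fromRows_zero,
    fromCols_zero, ← fromBlocks_one]
  congr 1
  ext (i | i) (j | j) <;> by_cases hij : i = j <;> simp [one_apply, hij, hc]

end AugmentedPencil

theorem transpose_mul_of_eq_mul_mul {R : Type*} [CommSemiring R] {p n k r : Type*} [Fintype p]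
    [Fintype k] {B : Matrix p n R} {V : Matrix p k R} {D : Matrix k k R} {Y : Matrix k n R}
    (hB : B = V * D * Y) (V' : Matrix p r R) : Bᵀ * V' = Yᵀ * Dᵀ * (Vᵀ * V') := by
  rw [hB, transpose_mul, transpose_mul, Matrix.mul_assoc, Matrix.mul_assoc, Matrix.mul_assoc]

section GSVD

variable {K : Type*} [Field K] {m p n : Type*} [Fintype n] [DecidableEq n]
  {A : Matrix m n K} {B : Matrix p n K} {X : Matrix n n K} {U : Matrix m n K}
  {V : Matrix p n K} {a b : n → K}

theorem isUnit_det_diagonal_of_ne_zero (ha : ∀ i, a i ≠ 0) : IsUnit (diagonal a).det := by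
  rw [det_diagonal]
  exact (Finset.prod_ne_zero_iff.mpr fun i _ => ha i).isUnit

theorem gsvd_mul_scaled_inv (hX : IsUnit X.det) (hB : B = V * diagonal b * X⁻¹) :
    B * (X * (diagonal a)⁻¹) = V * (diagonal b * (diagonal a)⁻¹) := by
  rw [hB, Matrix.mul_assoc, nonsing_inv_mul_cancel_left _ _ hX, Matrix.mul_assoc]

theorem gsvd_mul_scaled_inv_self (hX : IsUnit X.det) (ha : ∀ i, a i ≠ 0)
    (hA : A = U * diagonal a * X⁻¹) : A * (X * (diagonal a)⁻¹) = U := by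
  rw [gsvd_mul_scaled_inv hX hA, mul_nonsing_inv _ (isUnit_det_diagonal_of_ne_zero ha),
    Matrix.mul_one]

theorem gsvd_transpose_mul_left [Fintype m] [Fintype p] (hX : IsUnit X.det) (ha : ∀ i, a i ≠ 0)
    (hU : Uᵀ * U = 1) (hV : Vᵀ * V = 1) (hA : A = U * diagonal a * X⁻¹)
    (hB : B = V * diagonal b * X⁻¹) :
    Bᵀ * V = Aᵀ * A * (X * (diagonal a)⁻¹) * (diagonal b * (diagonal a)⁻¹) := by
  rw [Matrix.mul_assoc Aᵀ, gsvd_mul_scaled_inv_self hX ha hA, transpose_mul_of_eq_mul_mul hA,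
    transpose_mul_of_eq_mul_mul hB, hU, hV, Matrix.mul_one, Matrix.mul_one, diagonal_transpose,
    diagonal_transpose, Matrix.mul_assoc, ← Matrix.mul_assoc (diagonal a),
    (commute_diagonal a b).eq,
    mul_nonsing_inv_cancel_right _ _ (isUnit_det_diagonal_of_ne_zero ha)]

end GSVD

theorem stmt_1_general {m n p : ℕ}
    (A : Matrix (Fin m) (Fin n) ℝ) (B : Matrix (Fin p) (Fin n) ℝ)
    (X : Matrix (Fin n) (Fin n) ℝ)
    (U : Matrix (Fin m) (Fin n) ℝ) (V : Matrix (Fin p) (Fin n) ℝ)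
    (a b : Fin n → ℝ)
    (hX : IsUnit X.det)
    (hU : Uᵀ * U = 1) (hV : Vᵀ * V = 1)
    (ha : ∀ i, 0 < a i)
    (hA : A = U * Matrix.diagonal a * X⁻¹)
    (hB : B = V * Matrix.diagonal b * X⁻¹)
    (Vperp : Matrix (Fin p) (Fin (p - n)) ℝ)
    (hVp1 : Vᵀ * Vperp = 0) (hVp2 : Vperpᵀ * Vperp = 1)
    (Lam W' : Matrix (Fin n) (Fin n) ℝ)
    (hLam : Lam = Matrix.diagonal b * (Matrix.diagonal a)⁻¹)
    (hW' : W' = X * (Matrix.diagonal a)⁻¹)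
    (Btilde Atilde : Matrix (Fin p ⊕ Fin n) (Fin p ⊕ Fin n) ℝ)
    (hBtilde : Btilde = Matrix.fromBlocks 0 B Bᵀ 0)
    (hAtilde : Atilde = Matrix.fromBlocks 1 0 0 (Aᵀ * A))
    (Z : Matrix (Fin p ⊕ Fin n) ((Fin n ⊕ Fin n) ⊕ Fin (p - n)) ℝ)
    (hZ : Z = Matrix.fromBlocks
      (Matrix.fromCols ((Real.sqrt 2)⁻¹ • V) ((Real.sqrt 2)⁻¹ • V)) Vperp
      (Matrix.fromCols ((Real.sqrt 2)⁻¹ • W') (-((Real.sqrt 2)⁻¹ • W'))) 0)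
    (Lamtilde : Matrix ((Fin n ⊕ Fin n) ⊕ Fin (p - n)) ((Fin n ⊕ Fin n) ⊕ Fin (p - n)) ℝ)
    (hLamtilde : Lamtilde = Matrix.fromBlocks (Matrix.fromBlocks Lam 0 0 (-Lam)) 0 0 0) :
    Btilde * Z = Atilde * Z * Lamtilde ∧ Zᵀ * Atilde * Z = 1 := by
  have ha₀ : ∀ i, a i ≠ 0 := fun i => (ha i).ne'
  have hAW : A * W' = U := hW' ▸ gsvd_mul_scaled_inv_self hX ha₀ hA
  have hWtMW : W'ᵀ * (Aᵀ * A) * W' = 1 := by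
    rw [Matrix.mul_assoc, Matrix.mul_assoc, ← Matrix.mul_assoc W'ᵀ, ← transpose_mul, hAW, hU]
  have hBW : B * W' = V * Lam := hW' ▸ hLam ▸ gsvd_mul_scaled_inv hX hB
  have hBtV : Bᵀ * V = Aᵀ * A * W' * Lam :=
    hW' ▸ hLam ▸ gsvd_transpose_mul_left hX ha₀ hU hV hA hB
  have hBtVp : Bᵀ * Vperp = 0 := by
    rw [transpose_mul_of_eq_mul_mul hB, hVp1, Matrix.mul_zero]
  have hc : (Real.sqrt 2)⁻¹ * (Real.sqrt 2)⁻¹ + (Real.sqrt 2)⁻¹ * (Real.sqrt 2)⁻¹ = 1 := by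
    rw [← mul_inv, Real.mul_self_sqrt zero_le_two]
    norm_num
  subst hBtilde hAtilde hLamtilde
  exact ⟨augmented_pencil_mul_eigvecs B _ V Vperp W' Lam _ hBW hBtV hBtVp Z hZ,
    augmented_pencil_eigvecs_orthonormal _ V Vperp W' _ hV hVp1 hVp2 hWtMW hc Z hZ⟩

/-- GSVD of (A,B) gives the generalized eigendecomposition
`B̃ Z = Ã Z Λ̃` with `Zᵀ Ã Z = I` for the second augmented pair. -/
theorem stmt_1 {m n p : ℕ} (hmn : n ≤ m) (hpn : n ≤ p)
    (A : Matrix (Fin m) (Fin n) ℝ) (B : Matrix (Fin p) (Fin n) ℝ)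
    (X : Matrix (Fin n) (Fin n) ℝ)
    (U : Matrix (Fin m) (Fin n) ℝ) (V : Matrix (Fin p) (Fin n) ℝ)
    (a b : Fin n → ℝ)
    (hX : IsUnit X.det)
    (hU : Uᵀ * U = 1) (hV : Vᵀ * V = 1)
    (ha : ∀ i, 0 < a i) (hb : ∀ i, 0 < b i)
    (hab : ∀ i, a i ^ 2 + b i ^ 2 = 1)
    (hA : A = U * Matrix.diagonal a * X⁻¹)
    (hB : B = V * Matrix.diagonal b * X⁻¹)
    (Vperp : Matrix (Fin p) (Fin (p - n)) ℝ)
    (hVp1 : Vᵀ * Vperp = 0) (hVp2 : Vperpᵀ * Vperp = 1)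
    (Lam W' : Matrix (Fin n) (Fin n) ℝ)
    (hLam : Lam = Matrix.diagonal b * (Matrix.diagonal a)⁻¹)
    (hW' : W' = X * (Matrix.diagonal a)⁻¹)
    (Btilde Atilde : Matrix (Fin p ⊕ Fin n) (Fin p ⊕ Fin n) ℝ)
    (hBtilde : Btilde = Matrix.fromBlocks 0 B Bᵀ 0)
    (hAtilde : Atilde = Matrix.fromBlocks 1 0 0 (Aᵀ * A))
    (Z : Matrix (Fin p ⊕ Fin n) ((Fin n ⊕ Fin n) ⊕ Fin (p - n)) ℝ)
    (hZ : Z = Matrix.fromBlocks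
      (Matrix.fromCols ((Real.sqrt 2)⁻¹ • V) ((Real.sqrt 2)⁻¹ • V)) Vperp
      (Matrix.fromCols ((Real.sqrt 2)⁻¹ • W') (-((Real.sqrt 2)⁻¹ • W'))) 0)
    (Lamtilde : Matrix ((Fin n ⊕ Fin n) ⊕ Fin (p - n)) ((Fin n ⊕ Fin n) ⊕ Fin (p - n)) ℝ)
    (hLamtilde : Lamtilde = Matrix.fromBlocks (Matrix.fromBlocks Lam 0 0 (-Lam)) 0 0 0) :
    Btilde * Z = Atilde * Z * Lamtilde ∧ Zᵀ * Atilde * Z = 1 :=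
  stmt_1_general A B X U V a b hX hU hV ha hA hB Vperp hVp1 hVp2 Lam W' hLam hW' Btilde Atilde
    hBtilde hAtilde Z hZ Lamtilde hLamtilde
end

section
/- Let Â and B̂ be symmetric real N×N matrices, Ê and F̂ real N×N matrices, σ, σ̂ ∈ ℝ, and y, s ∈ ℝ^N with y ≠ 0. Assume Â y = σ B̂ y, (Â + Ê)(y + s) = σ̂ (B̂ + F̂)(y + s), yᵀ B̂ s = 0, yᵀ B̂ y ≠ 0, and yᵀ (B̂ + F̂)(y + s) ≠ 0. Set δ₁ = ‖s‖/‖y‖. Then χ(σ̂, σ) ≤ ( ‖y‖² (1 + δ₁) / √((yᵀ Â y)² + (yᵀ B̂ y)²) ) · √(‖Ê‖² + ‖F̂‖²). -/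
open Matrix

/-- The spectral (ℓ²-operator) norm of a real matrix. -/
noncomputable def specNorm {ι κ : Type*} [Fintype ι] [Fintype κ] [DecidableEq κ]
    (A : Matrix ι κ ℝ) : ℝ :=
  ‖LinearMap.toContinuousLinearMap (Matrix.toEuclideanLin A)‖

/-- The chordal distance between two real numbers. -/
noncomputable def chordal (a b : ℝ) : ℝ :=
  |a - b| / (Real.sqrt (1 + a ^ 2) * Real.sqrt (1 + b ^ 2))

/-!
Pair each eigenvalue with the Rayleigh quotients of `y`: `α = yᵀ Â y = σ β` with `β = yᵀ B̂ y`,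
and, because `yᵀ Â s = σ yᵀ B̂ s = 0` by symmetry, `α + e = σ̂ (β + f)` with `e = yᵀ Ê (y + s)`,
`f = yᵀ F̂ (y + s)`. The chordal distance of `σ̂ = [α + e : β + f]` and `σ = [α : β]` is the
projective one, `|eβ' - fα'| / (‖(α', β')‖ ‖(α, β)‖)` with `(α', β') = (α + e, β + f)`, so
Cauchy–Schwarz in `ℝ²` gives `χ(σ̂, σ) ≤ ‖(e, f)‖ / ‖(α, β)‖`, and `|e|, |f|` are bounded by
`‖y‖ (‖y‖ + ‖s‖)` times `‖Ê‖`, `‖F̂‖`.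
-/

lemma sqrt_sq_add_sq_of_eq_mul {α β σ : ℝ} (h : α = σ * β) :
    √(α ^ 2 + β ^ 2) = |β| * √(1 + σ ^ 2) := by
  rw [show α ^ 2 + β ^ 2 = β ^ 2 * (1 + σ ^ 2) by rw [h]; ring,
    Real.sqrt_mul (sq_nonneg _), Real.sqrt_sq_eq_abs]

lemma chordal_eq_of_eq_mul {α β α' β' σ σ' : ℝ} (hβ : β ≠ 0) (hβ' : β' ≠ 0)
    (hσ : α = σ * β) (hσ' : α' = σ' * β') :
    chordal σ' σ = |α' * β - α * β'| / (√(α' ^ 2 + β' ^ 2) * √(α ^ 2 + β ^ 2)) := by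
  rw [chordal, sqrt_sq_add_sq_of_eq_mul hσ, sqrt_sq_add_sq_of_eq_mul hσ',
    show α' * β - α * β' = (σ' - σ) * (β' * β) by rw [hσ, hσ']; ring, abs_mul, abs_mul,
    mul_mul_mul_comm, mul_comm |σ' - σ|, mul_div_mul_left _ _ (by positivity)]

lemma abs_mul_sub_mul_le_sqrt_mul_sqrt (a b c d : ℝ) :
    |a * d - b * c| ≤ √(a ^ 2 + b ^ 2) * √(c ^ 2 + d ^ 2) := by
  rw [← Real.sqrt_mul (by positivity), ← Real.sqrt_sq_eq_abs]
  exact Real.sqrt_le_sqrt (by nlinarith [sq_nonneg (a * c + b * d)])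

lemma chordal_le_of_eq_mul {α β e f σ σ' : ℝ} (hβ : β ≠ 0) (hβf : β + f ≠ 0)
    (hσ : α = σ * β) (hσ' : α + e = σ' * (β + f)) :
    chordal σ' σ ≤ √(e ^ 2 + f ^ 2) / √(α ^ 2 + β ^ 2) := by
  have hpos : 0 < √((α + e) ^ 2 + (β + f) ^ 2) := Real.sqrt_pos.mpr (by positivity)
  set P := √((α + e) ^ 2 + (β + f) ^ 2)
  calc chordal σ' σ = |e * (β + f) - f * (α + e)| / (P * √(α ^ 2 + β ^ 2)) := by
        rw [chordal_eq_of_eq_mul hβ hβf hσ hσ']; congr 2; ring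
    _ ≤ √(e ^ 2 + f ^ 2) * P / (P * √(α ^ 2 + β ^ 2)) := by
        gcongr; exact abs_mul_sub_mul_le_sqrt_mul_sqrt _ _ _ _
    _ = √(e ^ 2 + f ^ 2) / √(α ^ 2 + β ^ 2) := by
        rw [mul_comm P, mul_div_mul_right _ _ hpos.ne']

lemma sqrt_sq_add_sq_le {e f a b C : ℝ} (hC : 0 ≤ C) (he : |e| ≤ C * a) (hf : |f| ≤ C * b) :
    √(e ^ 2 + f ^ 2) ≤ C * √(a ^ 2 + b ^ 2) := by
  rw [← Real.sqrt_sq hC, ← Real.sqrt_mul (sq_nonneg _)]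
  apply Real.sqrt_le_sqrt
  nlinarith [sq_le_sq' (neg_le_of_abs_le he) (le_of_abs_le he),
    sq_le_sq' (neg_le_of_abs_le hf) (le_of_abs_le hf)]

section InnerProduct

variable {V : Type*} [NormedAddCommGroup V] [InnerProductSpace ℝ V]

lemma inner_apply_eq_zero_of_eq_smul {A B : V →ₗ[ℝ] V} (hA : A.IsSymmetric)
    (hB : B.IsSymmetric) {σ : ℝ} {y s : V} (hy : A y = σ • B y) (hs : inner ℝ y (B s) = 0) :
    inner ℝ y (A s) = 0 := by
  rw [← hA, hy, real_inner_smul_left, hB, hs, mul_zero]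

lemma inner_add_apply_add {T G : V →ₗ[ℝ] V} {y s : V} (hs : inner ℝ y (T s) = 0) :
    inner ℝ y ((T + G) (y + s)) = inner ℝ y (T y) + inner ℝ y (G (y + s)) := by
  rw [LinearMap.add_apply, inner_add_right, map_add, inner_add_right, hs, add_zero]

end InnerProduct

lemma norm_toEuclideanLin_apply_le {ι κ : Type*} [Fintype ι] [Fintype κ] [DecidableEq κ]
    (M : Matrix ι κ ℝ) (v : EuclideanSpace ℝ κ) :
    ‖Matrix.toEuclideanLin M v‖ ≤ specNorm M * ‖v‖ :=
  (LinearMap.toContinuousLinearMap (Matrix.toEuclideanLin M)).le_opNorm v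

lemma abs_inner_toEuclideanLin_add_le {ι : Type*} [Fintype ι] [DecidableEq ι]
    (M : Matrix ι ι ℝ) (y s : EuclideanSpace ℝ ι) :
    |inner ℝ y (Matrix.toEuclideanLin M (y + s))| ≤ ‖y‖ * (‖y‖ + ‖s‖) * specNorm M := by
  have hM : 0 ≤ specNorm M := norm_nonneg _
  calc |inner ℝ y (Matrix.toEuclideanLin M (y + s))|
      ≤ ‖y‖ * (specNorm M * ‖y + s‖) :=
        (abs_real_inner_le_norm _ _).trans (by gcongr; exact norm_toEuclideanLin_apply_le M _)
    _ ≤ ‖y‖ * (specNorm M * (‖y‖ + ‖s‖)) := by gcongr; exact norm_add_le y s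
    _ = ‖y‖ * (‖y‖ + ‖s‖) * specNorm M := by ring

theorem stmt_3_general {N : ℕ}
    (Ahat Bhat Ehat Fhat : Matrix (Fin N) (Fin N) ℝ)
    (hAsym : Ahat.IsSymm) (hBsym : Bhat.IsSymm)
    (σ σh : ℝ)
    (y s : EuclideanSpace ℝ (Fin N))
    (h1 : Matrix.toEuclideanLin Ahat y = σ • Matrix.toEuclideanLin Bhat y)
    (h2 : Matrix.toEuclideanLin (Ahat + Ehat) (y + s)
        = σh • Matrix.toEuclideanLin (Bhat + Fhat) (y + s))
    (h3 : (inner ℝ y (Matrix.toEuclideanLin Bhat s) : ℝ) = 0)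
    (h4 : (inner ℝ y (Matrix.toEuclideanLin Bhat y) : ℝ) ≠ 0)
    (h5 : (inner ℝ y (Matrix.toEuclideanLin (Bhat + Fhat) (y + s)) : ℝ) ≠ 0) :
    chordal σh σ ≤
      ‖y‖ ^ 2 * (1 + ‖s‖ / ‖y‖) /
        Real.sqrt ((inner ℝ y (Matrix.toEuclideanLin Ahat y) : ℝ) ^ 2
          + (inner ℝ y (Matrix.toEuclideanLin Bhat y) : ℝ) ^ 2) *
      Real.sqrt (specNorm Ehat ^ 2 + specNorm Fhat ^ 2) := by
  have hA := Matrix.isSymmetric_toEuclideanLin_iff.mpr (Matrix.isHermitian_iff_isSymm.mpr hAsym)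
  have hB := Matrix.isSymmetric_toEuclideanLin_iff.mpr (Matrix.isHermitian_iff_isSymm.mpr hBsym)
  rw [map_add Matrix.toEuclideanLin Ahat Ehat, map_add Matrix.toEuclideanLin Bhat Fhat] at h2
  rw [map_add Matrix.toEuclideanLin Bhat Fhat] at h5
  have hAE := inner_add_apply_add (G := Matrix.toEuclideanLin Ehat)
    (inner_apply_eq_zero_of_eq_smul hA hB h1 h3)
  have hBF := inner_add_apply_add (G := Matrix.toEuclideanLin Fhat) h3
  have hσ := congrArg (inner ℝ y) h1
  have hσh := congrArg (inner ℝ y) h2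
  rw [real_inner_smul_right] at hσ hσh
  rw [hAE, hBF] at hσh
  rw [hBF] at h5
  have hC : ‖y‖ ^ 2 * (1 + ‖s‖ / ‖y‖) = ‖y‖ * (‖y‖ + ‖s‖) := by
    rcases eq_or_ne ‖y‖ 0 with h | h
    · simp [h]
    · field_simp
  calc chordal σh σ ≤ _ / _ := chordal_le_of_eq_mul h4 h5 hσ hσh
    _ ≤ ‖y‖ * (‖y‖ + ‖s‖) * √(specNorm Ehat ^ 2 + specNorm Fhat ^ 2) / _ := by
      gcongr
      exact sqrt_sq_add_sq_le (by positivity) (abs_inner_toEuclideanLin_add_le _ y s)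
        (abs_inner_toEuclideanLin_add_le _ y s)
    _ = _ := by rw [hC]; ring

/-- perturbation bound for the eigenvalue of a symmetric pair
in the chordal metric. -/
theorem stmt_3 {N : ℕ}
    (Ahat Bhat Ehat Fhat : Matrix (Fin N) (Fin N) ℝ)
    (hAsym : Ahat.IsSymm) (hBsym : Bhat.IsSymm)
    (σ σh : ℝ)
    (y s : EuclideanSpace ℝ (Fin N)) (hy : y ≠ 0)
    (h1 : Matrix.toEuclideanLin Ahat y = σ • Matrix.toEuclideanLin Bhat y)
    (h2 : Matrix.toEuclideanLin (Ahat + Ehat) (y + s)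
        = σh • Matrix.toEuclideanLin (Bhat + Fhat) (y + s))
    (h3 : (inner ℝ y (Matrix.toEuclideanLin Bhat s) : ℝ) = 0)
    (h4 : (inner ℝ y (Matrix.toEuclideanLin Bhat y) : ℝ) ≠ 0)
    (h5 : (inner ℝ y (Matrix.toEuclideanLin (Bhat + Fhat) (y + s)) : ℝ) ≠ 0) :
    chordal σh σ ≤
      ‖y‖ ^ 2 * (1 + ‖s‖ / ‖y‖) /
        Real.sqrt ((inner ℝ y (Matrix.toEuclideanLin Ahat y) : ℝ) ^ 2
          + (inner ℝ y (Matrix.toEuclideanLin Bhat y) : ℝ) ^ 2) *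
      Real.sqrt (specNorm Ehat ^ 2 + specNorm Fhat ^ 2) :=
  stmt_3_general Ahat Bhat Ehat Fhat hAsym hBsym σ σh y s h1 h2 h3 h4 h5
end

section
/- Let (X, U, V, C, S) be a GSVD of the pair (A, B). Then ‖X⁻¹‖ ≤ √(‖A‖² + ‖B‖²). -/
open Matrix

lemma norm_toEuclideanLin {ι κ : Type*} [Fintype ι] [Fintype κ] [DecidableEq κ]
    (M : Matrix ι κ ℝ) (v : EuclideanSpace ℝ κ) :
    ‖Matrix.toEuclideanLin M v‖ =
      Real.sqrt (∑ i, (M.mulVec (WithLp.equiv 2 (κ → ℝ) v) i) ^ 2) := by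
  rw [EuclideanSpace.norm_eq]
  congr 1
  apply Finset.sum_congr rfl
  intro i _
  rw [Real.norm_eq_abs, sq_abs]
  rfl

lemma sumsq_le {ι κ : Type*} [Fintype ι] [Fintype κ] [DecidableEq κ]
    (M : Matrix ι κ ℝ) (v : κ → ℝ) :
    ∑ i, (M.mulVec v i) ^ 2 ≤ specNorm M ^ 2 * ∑ j, v j ^ 2 := by
  have h := (LinearMap.toContinuousLinearMap (Matrix.toEuclideanLin M)).le_opNorm
    ((WithLp.equiv 2 (κ → ℝ)).symm v)
  have h1 : ‖LinearMap.toContinuousLinearMap (Matrix.toEuclideanLin M)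
      ((WithLp.equiv 2 (κ → ℝ)).symm v)‖ = Real.sqrt (∑ i, (M.mulVec v i) ^ 2) := by
    rw [show (LinearMap.toContinuousLinearMap (Matrix.toEuclideanLin M))
        ((WithLp.equiv 2 (κ → ℝ)).symm v) = Matrix.toEuclideanLin M
        ((WithLp.equiv 2 (κ → ℝ)).symm v) from rfl, norm_toEuclideanLin]
    simp
  have h2 : ‖(WithLp.equiv 2 (κ → ℝ)).symm v‖ = Real.sqrt (∑ j, v j ^ 2) := by
    rw [EuclideanSpace.norm_eq]
    congr 1; apply Finset.sum_congr rfl; intro j _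
    rw [Real.norm_eq_abs, sq_abs]; rfl
  rw [h1, h2] at h
  have hms := mul_self_le_mul_self (Real.sqrt_nonneg _) h
  rw [Real.mul_self_sqrt (by positivity)] at hms
  calc ∑ i, (M.mulVec v i) ^ 2
      ≤ (specNorm M * Real.sqrt (∑ j, v j ^ 2)) * (specNorm M * Real.sqrt (∑ j, v j ^ 2)) := hms
    _ = specNorm M ^ 2 * ∑ j, v j ^ 2 := by
        rw [mul_mul_mul_comm, Real.mul_self_sqrt (by positivity)]; ring

lemma specNorm_le {ι κ : Type*} [Fintype ι] [Fintype κ] [DecidableEq κ]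
    (M : Matrix ι κ ℝ) (c : ℝ) (hc : 0 ≤ c)
    (h : ∀ v : κ → ℝ, ∑ i, (M.mulVec v i) ^ 2 ≤ c ^ 2 * ∑ j, v j ^ 2) :
    specNorm M ≤ c := by
  apply ContinuousLinearMap.opNorm_le_bound _ hc
  intro x
  rw [show (LinearMap.toContinuousLinearMap (Matrix.toEuclideanLin M)) x
      = Matrix.toEuclideanLin M x from rfl, norm_toEuclideanLin]
  have hx : ‖x‖ = Real.sqrt (∑ j, (WithLp.equiv 2 (κ → ℝ) x j) ^ 2) := by
    rw [EuclideanSpace.norm_eq]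
    congr 1; apply Finset.sum_congr rfl; intro j _
    rw [Real.norm_eq_abs, sq_abs]; rfl
  rw [hx, ← Real.sqrt_sq hc, ← Real.sqrt_mul (by positivity)]
  exact Real.sqrt_le_sqrt (h _)

lemma orth_sumsq {ι κ : Type*} [Fintype ι] [Fintype κ] [DecidableEq κ]
    (U : Matrix ι κ ℝ) (hU : Uᵀ * U = 1) (y : κ → ℝ) :
    ∑ i, (U.mulVec y i) ^ 2 = ∑ j, y j ^ 2 := by
  have h1 : ∑ i, (U.mulVec y i) ^ 2 = (U.mulVec y) ⬝ᵥ (U.mulVec y) := by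
    simp [dotProduct, sq]
  have h2 : ∑ j, y j ^ 2 = y ⬝ᵥ y := by simp [dotProduct, sq]
  rw [h1, h2, Matrix.dotProduct_mulVec, Matrix.vecMul_mulVec, hU, Matrix.vecMul_one]

/-- for a GSVD (X, U, V, C, S) of (A, B), ‖X⁻¹‖ ≤ √(‖A‖² + ‖B‖²). -/
theorem stmt_6 {m n p : ℕ} (hmn : n ≤ m) (hpn : n ≤ p)
    (A : Matrix (Fin m) (Fin n) ℝ) (B : Matrix (Fin p) (Fin n) ℝ)
    (X : Matrix (Fin n) (Fin n) ℝ)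
    (U : Matrix (Fin m) (Fin n) ℝ) (V : Matrix (Fin p) (Fin n) ℝ)
    (a b : Fin n → ℝ)
    (hX : IsUnit X.det)
    (hU : Uᵀ * U = 1) (hV : Vᵀ * V = 1)
    (ha : ∀ i, 0 < a i) (hb : ∀ i, 0 < b i)
    (hab : ∀ i, a i ^ 2 + b i ^ 2 = 1)
    (hA : A = U * Matrix.diagonal a * X⁻¹)
    (hB : B = V * Matrix.diagonal b * X⁻¹) :
    specNorm X⁻¹ ≤ Real.sqrt (specNorm A ^ 2 + specNorm B ^ 2) := by
  have hAB : (0:ℝ) ≤ specNorm A ^ 2 + specNorm B ^ 2 := by positivity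
  apply specNorm_le _ _ (Real.sqrt_nonneg _)
  intro v
  rw [Real.sq_sqrt hAB]
  set w := X⁻¹.mulVec v with hw
  have hAv : A.mulVec v = U.mulVec ((Matrix.diagonal a).mulVec w) := by
    rw [hA, ← Matrix.mulVec_mulVec, ← Matrix.mulVec_mulVec]
  have hBv : B.mulVec v = V.mulVec ((Matrix.diagonal b).mulVec w) := by
    rw [hB, ← Matrix.mulVec_mulVec, ← Matrix.mulVec_mulVec]
  have hsplit : ∑ i, (w i) ^ 2 = ∑ i, (A.mulVec v i) ^ 2 + ∑ i, (B.mulVec v i) ^ 2 := by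
    rw [hAv, hBv, orth_sumsq U hU, orth_sumsq V hV]
    rw [← Finset.sum_add_distrib]
    apply Finset.sum_congr rfl
    intro i _
    rw [Matrix.mulVec_diagonal, Matrix.mulVec_diagonal, mul_pow, mul_pow, ← add_mul, hab i,
      one_mul]
  calc ∑ i, (X⁻¹.mulVec v i) ^ 2
      = ∑ i, (A.mulVec v i) ^ 2 + ∑ i, (B.mulVec v i) ^ 2 := hsplit
    _ ≤ specNorm A ^ 2 * ∑ j, v j ^ 2 + specNorm B ^ 2 * ∑ j, v j ^ 2 :=
        add_le_add (sumsq_le A v) (sumsq_le B v)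
    _ = (specNorm A ^ 2 + specNorm B ^ 2) * ∑ j, v j ^ 2 := by ring
end

section
/- Let B̂ be a symmetric positive definite real N×N matrix, Â a symmetric real N×N matrix, and y ∈ ℝ^N nonzero. Let Y₂ ∈ ℝ^{N×(N−1)} satisfy Y₂ᵀ B̂ y = 0, Y₂ᵀ Â y = 0, Y₂ᵀ B̂ Y₂ = I_{N−1}, and Y₂ᵀ Â Y₂ = Σ₂, where Σ₂ is a diagonal matrix with diagonal entries μ₁, …, μ_{N−1}. Let Ê, F̂ be real N×N matrices, σ̂ ∈ ℝ, h ∈ ℝ^{N−1}, and set ŷ = y + Y₂ h; assume ŷ ≠ 0, (Â + Ê) ŷ = σ̂ (B̂ + F̂) ŷ, and m₀ := minᵢ |μᵢ − σ̂| > 0. Then sin∠(ŷ, y) ≤ ( ‖B̂⁻¹‖ / m₀ ) · ‖σ̂ F̂ − Ê‖. -/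
open Matrix

/-- `sinAngle w w'` is the sine of the angle between `w` and the line spanned
by `w'`, i.e. `min_{μ ∈ ℝ} ‖w − μ w'‖ / ‖w‖`. -/
noncomputable def sinAngle {ι : Type*} [Fintype ι] (w w' : EuclideanSpace ℝ ι) : ℝ :=
  ⨅ μ : ℝ, ‖w - μ • w'‖ / ‖w‖

/-!
Since `ŷ - y = Y₂ h`, taking `μ = 1` in the definition of the angle reduces the claim to
`m₀ ‖Y₂ h‖ ≤ ‖B̂⁻¹‖ ‖σ̂ F̂ - Ê‖ ‖ŷ‖`. The eigen-equation says that the residual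
`r = (σ̂ F̂ - Ê) ŷ` equals `(Â - σ̂ B̂) ŷ`; applying `Y₂ᵀ` kills the `y`-component and leaves
`(Σ₂ - σ̂) h = Y₂ᵀ r`, so `m₀ ‖h‖ ≤ ‖Y₂‖ ‖r‖`. Finally `Y₂ᵀ B̂ Y₂ = I` forces
`‖Y₂‖² ≤ ‖B̂⁻¹‖`, which gives `m₀ ‖Y₂ h‖ ≤ ‖Y₂‖² ‖r‖ ≤ ‖B̂⁻¹‖ ‖σ̂ F̂ - Ê‖ ‖ŷ‖`.
-/

namespace Matrix

open scoped Matrix.Norms.L2Operator ComplexOrder MatrixOrder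

variable {𝕜 m n : Type*} [RCLike 𝕜] [Fintype m] [Fintype n] [DecidableEq n]

lemma l2_opNorm_one_le : ‖(1 : Matrix n n 𝕜)‖ ≤ 1 := by
  rw [← diagonal_one, l2_opNorm_diagonal]
  exact (pi_norm_const_le 1).trans norm_one.le

lemma mul_norm_le_norm_toEuclideanLin_diagonal {d : n → 𝕜} {c : ℝ} (hc : 0 ≤ c)
    (hd : ∀ i, c ≤ ‖d i‖) (x : EuclideanSpace 𝕜 n) :
    c * ‖x‖ ≤ ‖toEuclideanLin (diagonal d) x‖ := by
  refine (sq_le_sq₀ (by positivity) (norm_nonneg _)).mp ?_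
  rw [mul_pow, EuclideanSpace.norm_sq_eq, EuclideanSpace.norm_sq_eq, Finset.mul_sum]
  gcongr with i
  simp only [ofLp_toLpLin, toLin'_apply, mulVec_diagonal, norm_mul, mul_pow]
  gcongr
  exact hd i

/-- Writing `B = Sᴴ * S`, the matrix `S * Y` has norm at most one while `‖S⁻¹‖ ^ 2 = ‖B⁻¹‖`. -/
lemma PosDef.l2_opNorm_mul_self_le_of_conjTranspose_mul_mul_eq_one [DecidableEq m]
    {B : Matrix n n 𝕜} (hB : B.PosDef) {Y : Matrix n m 𝕜} (hY : Yᴴ * B * Y = 1) :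
    ‖Y‖ * ‖Y‖ ≤ ‖B⁻¹‖ := by
  obtain ⟨S, hS, rfl⟩ :=
    CStarAlgebra.isStrictlyPositive_iff_eq_star_mul_self.mp hB.isStrictlyPositive
  rw [star_eq_conjTranspose] at hY ⊢
  have hSY : ‖S * Y‖ * ‖S * Y‖ ≤ 1 := by
    rw [← l2_opNorm_conjTranspose_mul_self, conjTranspose_mul, Matrix.mul_assoc,
      ← Matrix.mul_assoc Sᴴ, ← Matrix.mul_assoc, hY]
    exact l2_opNorm_one_le
  have hSinv : ‖S⁻¹‖ * ‖S⁻¹‖ = ‖(Sᴴ * S)⁻¹‖ := by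
    rw [← l2_opNorm_conjTranspose S⁻¹, ← l2_opNorm_conjTranspose_mul_self,
      conjTranspose_conjTranspose, mul_inv_rev, conjTranspose_nonsing_inv]
  have hYle : ‖Y‖ ≤ ‖S⁻¹‖ * ‖S * Y‖ := by
    calc ‖Y‖ = ‖S⁻¹ * (S * Y)‖ := by
          rw [← Matrix.mul_assoc, nonsing_inv_mul _ ((isUnit_iff_isUnit_det S).mp hS),
            Matrix.one_mul]
      _ ≤ ‖S⁻¹‖ * ‖S * Y‖ := l2_opNorm_mul _ _
  calc ‖Y‖ * ‖Y‖ ≤ (‖S⁻¹‖ * ‖S * Y‖) * (‖S⁻¹‖ * ‖S * Y‖) :=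
        mul_self_le_mul_self (norm_nonneg _) hYle
    _ = ‖S⁻¹‖ * ‖S⁻¹‖ * (‖S * Y‖ * ‖S * Y‖) := by ring
    _ ≤ ‖S⁻¹‖ * ‖S⁻¹‖ := mul_le_of_le_one_right (by positivity) hSY
    _ = ‖(Sᴴ * S)⁻¹‖ := hSinv

lemma toEuclideanLin_transpose_sub_smul_apply_add [DecidableEq m] {A B : Matrix n n 𝕜}
    {Y : Matrix n m 𝕜} {D : Matrix m m 𝕜} {y : EuclideanSpace 𝕜 n}
    (hBy : toEuclideanLin Yᵀ (toEuclideanLin B y) = 0)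
    (hAy : toEuclideanLin Yᵀ (toEuclideanLin A y) = 0)
    (hB : Yᵀ * B * Y = 1) (hA : Yᵀ * A * Y = D) (σ : 𝕜) (x : EuclideanSpace 𝕜 m) :
    toEuclideanLin Yᵀ (toEuclideanLin (A - σ • B) (y + toEuclideanLin Y x))
      = toEuclideanLin (D - σ • 1) x := by
  rw [← hA, ← hB]
  simp [hAy, hBy]

end Matrix

lemma sinAngle_le_norm_sub_div {ι : Type*} [Fintype ι] (w w' : EuclideanSpace ℝ ι) :
    sinAngle w w' ≤ ‖w - w'‖ / ‖w‖ := by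
  calc sinAngle w w' ≤ ‖w - (1 : ℝ) • w'‖ / ‖w‖ :=
        ciInf_le ⟨0, by rintro _ ⟨μ, rfl⟩; positivity⟩ 1
    _ = ‖w - w'‖ / ‖w‖ := by rw [one_smul]

section specNorm

open scoped Matrix.Norms.L2Operator

variable {m n : Type*} [Fintype m] [Fintype n] [DecidableEq n]

lemma specNorm_nonneg (A : Matrix m n ℝ) : 0 ≤ specNorm A := norm_nonneg _

lemma norm_toEuclideanLin_le_specNorm (A : Matrix m n ℝ) (x : EuclideanSpace ℝ n) :
    ‖toEuclideanLin A x‖ ≤ specNorm A * ‖x‖ :=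
  (LinearMap.toContinuousLinearMap (toEuclideanLin A)).le_opNorm x

lemma specNorm_transpose [DecidableEq m] (A : Matrix m n ℝ) : specNorm Aᵀ = specNorm A := by
  rw [← conjTranspose_eq_transpose_of_trivial]
  exact l2_opNorm_conjTranspose A

lemma Matrix.PosDef.specNorm_mul_self_le_of_transpose_mul_mul_eq_one [DecidableEq m]
    {B : Matrix n n ℝ} (hB : B.PosDef) {Y : Matrix n m ℝ} (hY : Yᵀ * B * Y = 1) :
    specNorm Y * specNorm Y ≤ specNorm B⁻¹ :=
  hB.l2_opNorm_mul_self_le_of_conjTranspose_mul_mul_eq_one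
    (by rwa [conjTranspose_eq_transpose_of_trivial])

end specNorm

theorem stmt_10_general {N : ℕ}
    (Ahat Bhat Ehat Fhat : Matrix (Fin N) (Fin N) ℝ)
    (hBpd : Bhat.PosDef)
    (y : EuclideanSpace ℝ (Fin N))
    (Y2 : Matrix (Fin N) (Fin (N - 1)) ℝ)
    (μs : Fin (N - 1) → ℝ)
    (hY2By : Matrix.toEuclideanLin Y2ᵀ (Matrix.toEuclideanLin Bhat y) = 0)
    (hY2Ay : Matrix.toEuclideanLin Y2ᵀ (Matrix.toEuclideanLin Ahat y) = 0)
    (hY2BY2 : Y2ᵀ * Bhat * Y2 = 1)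
    (hY2AY2 : Y2ᵀ * Ahat * Y2 = Matrix.diagonal μs)
    (σh : ℝ) (h : EuclideanSpace ℝ (Fin (N - 1)))
    (yh : EuclideanSpace ℝ (Fin N))
    (hyh : yh = y + Matrix.toEuclideanLin Y2 h)
    (heig : Matrix.toEuclideanLin (Ahat + Ehat) yh
        = σh • Matrix.toEuclideanLin (Bhat + Fhat) yh)
    (m₀ : ℝ) (hm₀ : m₀ = ⨅ i, |μs i - σh|) (hm₀pos : 0 < m₀) :
    sinAngle yh y ≤ specNorm Bhat⁻¹ / m₀ * specNorm (σh • Fhat - Ehat) := by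
  set r := toEuclideanLin (σh • Fhat - Ehat) yh
  have hres : toEuclideanLin (Ahat - σh • Bhat) yh = r := by
    simp only [r, map_add, map_sub, map_smul, LinearMap.add_apply, LinearMap.sub_apply,
      LinearMap.smul_apply] at heig ⊢
    linear_combination (norm := module) heig
  have hproj : toEuclideanLin (diagonal fun i ↦ μs i - σh) h = toEuclideanLin Y2ᵀ r := by
    rw [← hres, hyh, toEuclideanLin_transpose_sub_smul_apply_add hY2By hY2Ay hY2BY2 hY2AY2,
      smul_one_eq_diagonal, diagonal_sub]
  have hgap : ∀ i, m₀ ≤ ‖μs i - σh‖ := fun i ↦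
    hm₀ ▸ ciInf_le ⟨0, by rintro _ ⟨j, rfl⟩; positivity⟩ i
  have hY2 := hBpd.specNorm_mul_self_le_of_transpose_mul_mul_eq_one hY2BY2
  have hsub : ‖yh - y‖ * m₀ ≤ specNorm Bhat⁻¹ * specNorm (σh • Fhat - Ehat) * ‖yh‖ := by
    calc ‖yh - y‖ * m₀ ≤ specNorm Y2 * ‖h‖ * m₀ := by
          rw [hyh, add_sub_cancel_left]
          exact mul_le_mul_of_nonneg_right (norm_toEuclideanLin_le_specNorm _ _) hm₀pos.le
      _ = specNorm Y2 * (m₀ * ‖h‖) := by ring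
      _ ≤ specNorm Y2 * ‖toEuclideanLin Y2ᵀ r‖ := mul_le_mul_of_nonneg_left
          (hproj ▸ mul_norm_le_norm_toEuclideanLin_diagonal hm₀pos.le hgap h) (specNorm_nonneg _)
      _ ≤ specNorm Y2 * (specNorm Y2 * ‖r‖) := mul_le_mul_of_nonneg_left
          (specNorm_transpose Y2 ▸ norm_toEuclideanLin_le_specNorm _ _) (specNorm_nonneg _)
      _ = specNorm Y2 * specNorm Y2 * ‖r‖ := by ring
      _ ≤ specNorm Bhat⁻¹ * (specNorm (σh • Fhat - Ehat) * ‖yh‖) :=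
          mul_le_mul hY2 (norm_toEuclideanLin_le_specNorm _ _) (norm_nonneg _) (specNorm_nonneg _)
      _ = _ := by ring
  refine (sinAngle_le_norm_sub_div yh y).trans (div_le_of_le_mul₀ (norm_nonneg _) ?_ ?_)
  · exact mul_nonneg (div_nonneg (specNorm_nonneg _) hm₀pos.le) (specNorm_nonneg _)
  · rwa [div_mul_eq_mul_div, div_mul_eq_mul_div, le_div_iff₀ hm₀pos]

/-- bound on the angle between a perturbed eigenvector `ŷ = y + Y₂ h`
and the exact eigenvector `y` of a symmetric definite pair. -/
theorem stmt_10 {N : ℕ}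
    (Ahat Bhat Ehat Fhat : Matrix (Fin N) (Fin N) ℝ)
    (hBpd : Bhat.PosDef) (hAsym : Ahat.IsSymm)
    (y : EuclideanSpace ℝ (Fin N)) (hy : y ≠ 0)
    (Y2 : Matrix (Fin N) (Fin (N - 1)) ℝ)
    (μs : Fin (N - 1) → ℝ)
    (hY2By : Matrix.toEuclideanLin Y2ᵀ (Matrix.toEuclideanLin Bhat y) = 0)
    (hY2Ay : Matrix.toEuclideanLin Y2ᵀ (Matrix.toEuclideanLin Ahat y) = 0)
    (hY2BY2 : Y2ᵀ * Bhat * Y2 = 1)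
    (hY2AY2 : Y2ᵀ * Ahat * Y2 = Matrix.diagonal μs)
    (σh : ℝ) (h : EuclideanSpace ℝ (Fin (N - 1)))
    (yh : EuclideanSpace ℝ (Fin N))
    (hyh : yh = y + Matrix.toEuclideanLin Y2 h)
    (hyh0 : yh ≠ 0)
    (heig : Matrix.toEuclideanLin (Ahat + Ehat) yh
        = σh • Matrix.toEuclideanLin (Bhat + Fhat) yh)
    (m₀ : ℝ) (hm₀ : m₀ = ⨅ i, |μs i - σh|) (hm₀pos : 0 < m₀) :
    sinAngle yh y ≤ specNorm Bhat⁻¹ / m₀ * specNorm (σh • Fhat - Ehat) :=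
  stmt_10_general Ahat Bhat Ehat Fhat hBpd y Y2 μs hY2By hY2Ay hY2BY2 hY2AY2 σh h yh hyh heig m₀ hm₀
    hm₀pos
end
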